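/- Let R be a commutative Noetherian ring, I an ideal, and M, N finitely generated R-modules. Then the generalized local cohomology module H^j_I(M,N) is I_M-torsion for all j ≥ 0, where I_M = ann_R(M/IM). -/

import Mathlib

open Opposite CategoryTheory CategoryTheory.Limits

noncomputable section

universe u

variable (R : Type u) [CommRing R]

/-- The directed system `n ↦ M ⧸ I^n M` (contravariant in `n`). -/
def modIdealPowersDiagram (I : Ideal R) (M : Type u) [AddCommGroup M] [Module R M] :
    ℕᵒᵖ ⥤ ModuleCat.{u} R where
  obj t := ModuleCat.of R (M ⧸ (I ^ (unop t) • ⊤ : Submodule R M))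
  map w := ModuleCat.ofHom (Submodule.mapQ _ _ LinearMap.id
    (Submodule.smul_mono_left (Ideal.pow_le_pow_right w.unop.down.down)))
  map_id t := by
    ext x
    rfl
  map_comp f g := by
    ext x
    rfl

/-- `H^j_I(M,N) = colim_n Ext^j_R(M/I^nM, N)`, the generalized local cohomology module. -/
def genLocalCohomology (I : Ideal R) (M N : Type u) [AddCommGroup M] [Module R M]
    [AddCommGroup N] [Module R N] (j : ℕ) : ModuleCat.{u} R :=
  colimit ((modIdealPowersDiagram R I M).op ⋙ Ext R (ModuleCat.{u} R) j ⋙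
    (evaluation (ModuleCat.{u} R) (ModuleCat.{u} R)).obj (ModuleCat.of R N))

/-- `Ext^j_R(A, B)` as an `R`-module. -/
def extModule (j : ℕ) (A B : Type u) [AddCommGroup A] [Module R A]
    [AddCommGroup B] [Module R B] : ModuleCat.{u} R :=
  ((Ext R (ModuleCat.{u} R) j).obj (op (ModuleCat.of R A))).obj (ModuleCat.of R B)

/-- `K` is `I`-cofinite: `Supp K ⊆ V(I)` and every `Ext^j_R(R/I, K)` is finitely generated. -/
def IsCofinite (I : Ideal R) (K : Type u) [AddCommGroup K] [Module R K] : Prop :=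
  Module.support R K ⊆ PrimeSpectrum.zeroLocus (I : Set R) ∧
    ∀ j : ℕ, Module.Finite R (extModule R j (R ⧸ I) K)

/-- The `I`-torsion submodule `Γ_I(N)`. -/
def gammaTorsion (I : Ideal R) (N : Type u) [AddCommGroup N] [Module R N] : Submodule R N :=
  ⨆ k : ℕ, Submodule.torsionBySet R N ((I ^ k : Ideal R) : Set R)

/-- `I_M := ann_R(M/IM)`. -/
def idealAnnQuot (I : Ideal R) (M : Type u) [AddCommGroup M] [Module R M] : Ideal R :=
  Module.annihilator R (M ⧸ (I • ⊤ : Submodule R M))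

/-- A minimax module: a f.g. submodule with Artinian quotient. -/
def IsMinimax (K : Type u) [AddCommGroup K] [Module R K] : Prop :=
  ∃ T : Submodule R K, Module.Finite R T ∧ IsArtinian R (K ⧸ T)

/-- A nontrivial module is `p`-secondary if every `a : R` acts surjectively or nilpotently
and `p = √(ann S)`. -/
def IsSecondary (p : Ideal R) (S : Type u) [AddCommGroup S] [Module R S] : Prop :=
  Nontrivial S ∧ (∀ a : R, Function.Surjective (fun s : S => a • s) ∨
    ∃ n : ℕ, ∀ s : S, a ^ n • s = 0) ∧ p = (Module.annihilator R S).radical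

/-- The attached primes of `A`: primes `p` such that `A` has a `p`-secondary quotient. -/
def attachedPrimes (A : Type u) [AddCommGroup A] [Module R A] : Set (Ideal R) :=
  { p | ∃ Q : Submodule R A, IsSecondary R p (A ⧸ Q) }

/-!
An element of `colim_n Ext^j(M/I^nM, N)` comes from some `Ext^j(M/I^nM, N)`. Since
`I_M • M ⊆ IM`, the ideal `I_M^n` annihilates `M/I^nM`, and whatever annihilates the first
argument of `Ext` annihilates `Ext`: multiplication by `r` on a projective resolution lifts
`r • 𝟙 = 0`, hence is null-homotopic, and so acts by zero on the cohomology of `Hom(P, N)`.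
-/

section Homological

variable {C : Type*} [Category C]

theorem CategoryTheory.Iso.smul_id_eq_zero {R : Type*} [Semiring R] [Preadditive C] [Linear R C]
    {X Y : C} (e : X ≅ Y) {r : R} (hr : r • 𝟙 X = 0) : r • 𝟙 Y = 0 :=
  calc r • 𝟙 Y = e.inv ≫ (r • 𝟙 X) ≫ e.hom := by simp
    _ = 0 := by rw [hr, Limits.zero_comp, Limits.comp_zero]

theorem HomologicalComplex.homologyMap_smul {R : Type*} [Semiring R] [Preadditive C] [Linear R C]
    {ι : Type*} {c : ComplexShape ι} {K L : HomologicalComplex C c} (r : R) (φ : K ⟶ L) (i : ι)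
    [K.HasHomology i] [L.HasHomology i] : homologyMap (r • φ) i = r • homologyMap φ i :=
  ShortComplex.homologyMap_smul ((shortComplexFunctor C c i).map φ) r

variable {R : Type*} [CommRing R] [Abelian C] [Linear R C]

theorem ChainComplex.linearYonedaObj_smul_id_homology_eq_zero (P : ChainComplex C ℕ) (Y : C)
    {r : R} (h : Homotopy (r • 𝟙 P) 0) (n : ℕ) :
    r • 𝟙 ((P.linearYonedaObj R Y).homology n) = 0 := by
  let F := ((linearYoneda R C).obj Y).rightOp
  have h' : Homotopy (r • 𝟙 (P.linearYonedaObj R Y)) 0 :=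
    (Homotopy.ofEq ?_).trans ((F.mapHomotopy h).unop.trans (Homotopy.ofEq ?_))
  · rw [← HomologicalComplex.homologyMap_id, ← HomologicalComplex.homologyMap_smul,
      h'.homologyMap_eq, HomologicalComplex.homologyMap_zero]
  · ext i (x : P.X i ⟶ Y)
    change r • x = (r • 𝟙 (P.X i)) ≫ x
    rw [Linear.smul_comp, Category.id_comp]
  · ext i (x : P.X i ⟶ Y)
    change (0 : P.X i ⟶ P.X i) ≫ x = 0
    rw [Limits.zero_comp]

theorem CategoryTheory.ProjectiveResolution.smul_id_comp_π_eq_zero {X : C} {r : R}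
    (hr : r • 𝟙 X = 0) (P : ProjectiveResolution X) : (r • 𝟙 P.complex) ≫ P.π = 0 := by
  ext
  change (r • 𝟙 _) ≫ P.π.f 0 = (0 : P.complex.X 0 ⟶ X)
  rw [Linear.smul_comp, Category.id_comp, ← Category.comp_id (P.π.f 0), ← Linear.comp_smul]
  exact hr ▸ Limits.comp_zero

theorem Ext_smul_id_eq_zero [EnoughProjectives C] {X : C} {r : R} (hr : r • 𝟙 X = 0) (n : ℕ)
    (Y : C) : r • 𝟙 (((Ext R C n).obj (op X)).obj Y) = 0 := by
  let P : ProjectiveResolution X := HasProjectiveResolution.out.some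
  have h : Homotopy (r • 𝟙 P.complex) 0 := P.liftHomotopyZero _ (P.smul_id_comp_π_eq_zero hr)
  exact (P.isoExt n Y).symm.smul_id_eq_zero (R := R)
    (P.complex.linearYonedaObj_smul_id_homology_eq_zero Y h n)

end Homological

section Algebra

variable {R : Type u} [CommRing R]

theorem Module.annihilator_le_annihilator_Ext (A : Type u) [AddCommGroup A] [Module R A]
    (N : ModuleCat.{u} R) (n : ℕ) :
    Module.annihilator R A ≤
      Module.annihilator R (((Ext R (ModuleCat.{u} R) n).obj (op (ModuleCat.of R A))).obj N) := by
  intro r hr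
  have hA : r • 𝟙 (ModuleCat.of R A) = 0 := by
    ext a
    exact Module.mem_annihilator.1 hr a
  exact Module.mem_annihilator.2 fun ξ =>
    congr($(Ext_smul_id_eq_zero hA n N).hom ξ)

variable {M : Type*} [AddCommGroup M] [Module R M]

theorem Submodule.pow_smul_top_le_pow_smul_top {I J : Ideal R}
    (h : J • (⊤ : Submodule R M) ≤ I • ⊤) (n : ℕ) : J ^ n • (⊤ : Submodule R M) ≤ I ^ n • ⊤ := by
  induction n with
  | zero => simp
  | succ n ih =>
    calc J ^ (n + 1) • (⊤ : Submodule R M) = J ^ n • J • ⊤ := by rw [pow_succ, mul_smul]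
      _ ≤ J ^ n • I • ⊤ := smul_mono_right _ h
      _ = I • J ^ n • ⊤ := by rw [← mul_smul, mul_comm, mul_smul]
      _ ≤ I • I ^ n • ⊤ := smul_mono_right _ ih
      _ = I ^ (n + 1) • ⊤ := by rw [pow_succ', mul_smul]

theorem Module.annihilator_quotient_smul_top_pow_le (I : Ideal R) (n : ℕ) :
    Module.annihilator R (M ⧸ I • (⊤ : Submodule R M)) ^ n ≤
      Module.annihilator R (M ⧸ I ^ n • (⊤ : Submodule R M)) := by
  have h : Module.annihilator R (M ⧸ I • (⊤ : Submodule R M)) • (⊤ : Submodule R M) ≤ I • ⊤ := by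
    rw [Submodule.annihilator_quotient]
    exact Submodule.smul_le.2 fun r hr m _ => Submodule.mem_colon.1 hr m trivial
  intro r hr
  rw [Submodule.annihilator_quotient, Submodule.mem_colon]
  exact fun m _ => Submodule.pow_smul_top_le_pow_smul_top h n (Submodule.smul_mem_smul hr trivial)

theorem gammaTorsion_colimit_eq_top {D : Type} [SmallCategory D] [IsFiltered D] (J : Ideal R)
    (F : D ⥤ ModuleCat.{u} R) (h : ∀ t, ∃ k, J ^ k ≤ Module.annihilator R (F.obj t)) :
    gammaTorsion R J (colimit F : ModuleCat.{u} R) = ⊤ := by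
  have : PreservesFilteredColimitsOfSize.{0, 0} (forget (ModuleCat.{u} R)) :=
    preservesFilteredColimitsOfSize_shrink _
  refine eq_top_iff.2 fun x _ => ?_
  obtain ⟨t, y, rfl⟩ := Concrete.colimit_exists_rep F x
  obtain ⟨k, hk⟩ := h t
  refine Submodule.mem_iSup_of_mem k (Submodule.mem_torsionBySet_iff _ _ |>.2 ?_)
  rintro ⟨r, hr⟩
  rw [← map_smul, Module.mem_annihilator.1 (hk hr), map_zero]

end Algebra

theorem stmt5 (I : Ideal R) (M N : Type u)
    [AddCommGroup M] [Module R M]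
    [AddCommGroup N] [Module R N] (j : ℕ) :
    gammaTorsion R (idealAnnQuot R I M) (genLocalCohomology R I M N j) = ⊤ :=
  gammaTorsion_colimit_eq_top _ _ fun t => ⟨unop (unop t),
    (Module.annihilator_quotient_smul_top_pow_le I _).trans
      (Module.annihilator_le_annihilator_Ext _ _ j)⟩

end
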